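/- arXiv:2603.20761 — 3 statements merged into one kernel-verified Lean document; each statement's English description precedes it below -/
import Mathlib

section
/- Let V₁ and V₂ be isometries defining irreducible quantum Markov chains with the same environment dimension k and system dimensions d₁ and d₂, with stationary states ρ₁ˢˢ, ρ₂ˢˢ. Then the following are equivalent: (i) stationary output equivalence: for every n ≥ 1 and all words i, j of length n, tr(K_{1,i} ρ₁ˢˢ K_{1,j}ᴴ) = tr(K_{2,i} ρ₂ˢˢ K_{2,j}ᴴ); (ii) weak output equivalence: there exist states ρ₁ on ℂ^{d₁} and ρ₂ on ℂ^{d₂} such that for every n ≥ 1 and all words i, j of length n, tr(K_{1,i} ρ₁ K_{1,j}ᴴ) = tr(K_{2,i} ρ₂ K_{2,j}ᴴ); (iii) macroscopic output equivalence: for every k₀ ≥ 1 and every Hermitian k^{k₀}×k^{k₀} matrix Q, one has m_{V₁}(Q) = m_{V₂}(Q) and σ²_{V₁}(Q) = σ²_{V₂}(Q). -/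
/-!
(i) ⇒ (ii) is trivial. For (ii) ⇒ (i): one step of the predual channel is absorbed by the first
output letter, which is then traced out, so output equivalence of `(ρ₁, ρ₂)` passes to
`(T_{V₁*} ρ₁, T_{V₂*} ρ₂)` and, by linearity, to the Cesàro means of the iterates. These means lie
in the compact set of states and `T_*(c_N) - c_N = O(1/N)`, so every cluster point is an invariant
state, i.e. the stationary state by irreducibility. Hence the Cesàro means converge to `ρˢˢ`, and
the output equivalence passes to the limit.

(i) ⇒ (iii) since the mean and the correlations are functionals of the stationary output states;
(iii) ⇒ (i) since the Hermitian matrices span all matrices over `ℂ`, so the means `tr(ρ^out(n) Q)`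
determine `ρ^out(n)`.
-/

open Matrix Filter
open scoped Kronecker ComplexConjugate ComplexOrder

noncomputable section

namespace QMCPaper

/-- The `j`-th block (Kraus operator style) of a `(d₁·k)×d₂` matrix. -/
def blk {d₁ d₂ k : ℕ} (V : Matrix (Fin d₁ × Fin k) (Fin d₂) ℂ) (j : Fin k) :
    Matrix (Fin d₁) (Fin d₂) ℂ :=
  fun a b => V (a, j) b

/-- The Kraus operators of a QMC isometry. -/
def kraus {d k : ℕ} (V : Matrix (Fin d × Fin k) (Fin d) ℂ) (j : Fin k) :
    Matrix (Fin d) (Fin d) ℂ :=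
  blk V j

/-- The transition channel `T_V(X) = Vᴴ (X ⊗ 1_k) V = Σ_j K_jᴴ X K_j`. -/
def chan {d k : ℕ} (V : Matrix (Fin d × Fin k) (Fin d) ℂ)
    (X : Matrix (Fin d) (Fin d) ℂ) : Matrix (Fin d) (Fin d) ℂ :=
  ∑ j : Fin k, (kraus V j)ᴴ * X * kraus V j

/-- The predual channel `T_{V*}(ρ) = Σ_j K_j ρ K_jᴴ`. -/
def predual {d k : ℕ} (V : Matrix (Fin d × Fin k) (Fin d) ℂ)
    (ρ : Matrix (Fin d) (Fin d) ℂ) : Matrix (Fin d) (Fin d) ℂ :=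
  ∑ j : Fin k, kraus V j * ρ * (kraus V j)ᴴ

/-- A state: positive semidefinite matrix of trace one. -/
def IsState {d : ℕ} (ρ : Matrix (Fin d) (Fin d) ℂ) : Prop :=
  ρ.PosSemidef ∧ ρ.trace = 1

/-- `V` is an isometry defining an irreducible QMC with (unique, faithful) stationary
state `ρss`. -/
def IsIrreducible {d k : ℕ} (V : Matrix (Fin d × Fin k) (Fin d) ℂ)
    (ρss : Matrix (Fin d) (Fin d) ℂ) : Prop :=
  Vᴴ * V = 1 ∧ IsState ρss ∧ predual V ρss = ρss ∧ ρss.PosDef ∧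
    ∀ ρ, IsState ρ → predual V ρ = ρ → ρ = ρss

/-- For a word `i = (i_0, …, i_{n-1})`, the operator `K_i = K_{i_{n-1}} ⋯ K_{i_0}`. -/
def krausWord {d k : ℕ} (V : Matrix (Fin d × Fin k) (Fin d) ℂ) {n : ℕ}
    (i : Fin n → Fin k) : Matrix (Fin d) (Fin d) ℂ :=
  ((List.ofFn i).reverse.map (kraus V)).prod

/-- The output state at time `n` with initial system state `ρ`:
its `(i,j)` entry is `tr(K_i ρ K_jᴴ)`. -/
def outState {d k : ℕ} (V : Matrix (Fin d × Fin k) (Fin d) ℂ)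
    (ρ : Matrix (Fin d) (Fin d) ℂ) (n : ℕ) :
    Matrix (Fin n → Fin k) (Fin n → Fin k) ℂ :=
  fun i j => (krausWord V i * ρ * (krausWord V j)ᴴ).trace

/-- Output equivalence (with given initial states): equality of all output states. -/
def OutputEquiv {d₁ d₂ k : ℕ}
    (V₁ : Matrix (Fin d₁ × Fin k) (Fin d₁) ℂ) (ρ₁ : Matrix (Fin d₁) (Fin d₁) ℂ)
    (V₂ : Matrix (Fin d₂ × Fin k) (Fin d₂) ℂ) (ρ₂ : Matrix (Fin d₂) (Fin d₂) ℂ) : Prop :=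
  ∀ n : ℕ, 1 ≤ n → ∀ i j : Fin n → Fin k,
    (krausWord V₁ i * ρ₁ * (krausWord V₁ j)ᴴ).trace =
      (krausWord V₂ i * ρ₂ * (krausWord V₂ j)ᴴ).trace

/-- A (possibly rectangular) unitary matrix. -/
def IsUnitaryMat {d₁ d₂ : ℕ} (W : Matrix (Fin d₁) (Fin d₂) ℂ) : Prop :=
  Wᴴ * W = 1 ∧ W * Wᴴ = 1

end QMCPaper

namespace QMCPaper

/-- The local observable `Q^{(l)}` (with `l` counted from `0`):
`Q` acting on the `k₀` output sites `l, …, l+k₀−1` of a chain of `n` sites,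
and the identity elsewhere. -/
def localObs {k k₀ : ℕ} (Q : Matrix (Fin k₀ → Fin k) (Fin k₀ → Fin k) ℂ)
    (n l : ℕ) : Matrix (Fin n → Fin k) (Fin n → Fin k) ℂ :=
  fun x y =>
    (if h : l + k₀ ≤ n then
        Q (fun j => x ⟨l + (j : ℕ), by have := j.isLt; omega⟩)
          (fun j => y ⟨l + (j : ℕ), by have := j.isLt; omega⟩)
      else 0) *
    ∏ j : Fin n, if l ≤ (j : ℕ) ∧ (j : ℕ) < l + k₀ then 1
      else (if x j = y j then 1 else 0)

/-- The stationary mean `m_V(Q) = tr(ρ_V^out(k₀) Q)`. -/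
def statMean {d k k₀ : ℕ} (V : Matrix (Fin d × Fin k) (Fin d) ℂ)
    (ρss : Matrix (Fin d) (Fin d) ℂ)
    (Q : Matrix (Fin k₀ → Fin k) (Fin k₀ → Fin k) ℂ) : ℂ :=
  (outState V ρss k₀ * Q).trace

/-- The stationary correlations `c_{l,V}(Q)`. -/
def statCorr {d k k₀ : ℕ} (V : Matrix (Fin d × Fin k) (Fin d) ℂ)
    (ρss : Matrix (Fin d) (Fin d) ℂ)
    (Q : Matrix (Fin k₀ → Fin k) (Fin k₀ → Fin k) ℂ) (l : ℕ) : ℂ :=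
  if l = 0 then
    (outState V ρss k₀ * (Q - statMean V ρss Q • 1) ^ 2).trace
  else
    (outState V ρss (k₀ + l) *
      ((2 : ℂ)⁻¹ •
        ((localObs Q (k₀ + l) 0 - statMean V ρss Q • 1) *
            (localObs Q (k₀ + l) l - statMean V ρss Q • 1) +
          (localObs Q (k₀ + l) l - statMean V ρss Q • 1) *
            (localObs Q (k₀ + l) 0 - statMean V ρss Q • 1)))).trace

/-- The asymptotic variance `σ²_V(Q) = c_{0,V}(Q) + 2 Σ_{l≥1} c_{l,V}(Q)`. -/
def asympVar {d k k₀ : ℕ} (V : Matrix (Fin d × Fin k) (Fin d) ℂ)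
    (ρss : Matrix (Fin d) (Fin d) ℂ)
    (Q : Matrix (Fin k₀ → Fin k) (Fin k₀ → Fin k) ℂ) : ℂ :=
  statCorr V ρss Q 0 + 2 * ∑' l : ℕ, statCorr V ρss Q (l + 1)


end QMCPaper

open scoped Topology

namespace Matrix

lemma isClosed_setOf_posSemidef {𝕜 n : Type*} [RCLike 𝕜] [Fintype n] :
    IsClosed {M : Matrix n n 𝕜 | M.PosSemidef} := by
  simp only [posSemidef_iff_dotProduct_mulVec, Set.ofPred_and, Set.ofPred_forall, IsHermitian]
  exact (isClosed_eq continuous_id.matrix_conjTranspose continuous_id).inter <|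
    isClosed_iInter fun x => isClosed_le continuous_const <|
      continuous_const.dotProduct (continuous_id.matrix_mulVec continuous_const)

lemma continuous_trace_mul_mul {R l m n : Type*} [Fintype l] [Fintype m] [Fintype n]
    [TopologicalSpace R] [NonUnitalNonAssocSemiring R] [IsTopologicalSemiring R]
    (A : Matrix l m R) (B : Matrix n l R) :
    Continuous fun X : Matrix m n R => (A * X * B).trace :=
  ((continuous_const.matrix_mul continuous_id).matrix_mul continuous_const).matrix_trace

lemma eq_of_trace_mul_isHermitian {n : Type*} [Fintype n] [DecidableEq n]
    {A B : Matrix n n ℂ}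
    (h : ∀ Q : Matrix n n ℂ, Q.IsHermitian → (A * Q).trace = (B * Q).trace) : A = B := by
  refine ext_iff_trace_mul_right.mpr fun Q => ?_
  rw [← realPart_add_I_smul_imaginaryPart Q]
  simp only [Matrix.mul_add, Matrix.mul_smul, trace_add, trace_smul, h _ (realPart Q).2,
    h _ (imaginaryPart Q).2]

end Matrix

namespace QMCPaper

section Channel

variable {d k : ℕ} (V : Matrix (Fin d × Fin k) (Fin d) ℂ)

lemma sum_conjTranspose_kraus_mul_kraus (hV : Vᴴ * V = 1) :
    ∑ j : Fin k, (kraus V j)ᴴ * kraus V j = 1 := by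
  rw [← hV]
  ext b b'
  simp only [Matrix.sum_apply, Matrix.mul_apply, Matrix.conjTranspose_apply, kraus, blk,
    Fintype.sum_prod_type]
  exact Finset.sum_comm

lemma trace_predual (hV : Vᴴ * V = 1) (ρ : Matrix (Fin d) (Fin d) ℂ) :
    (predual V ρ).trace = ρ.trace := by
  rw [predual, trace_sum]
  simp_rw [trace_mul_cycle _ ρ]
  rw [← trace_sum, ← Finset.sum_mul, sum_conjTranspose_kraus_mul_kraus V hV, one_mul]

lemma isState_predual (hV : Vᴴ * V = 1) {ρ : Matrix (Fin d) (Fin d) ℂ} (hρ : IsState ρ) :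
    IsState (predual V ρ) :=
  ⟨posSemidef_sum _ fun j _ => hρ.1.mul_mul_conjTranspose_same _,
    by rw [trace_predual V hV, hρ.2]⟩

lemma isState_iterate_predual (hV : Vᴴ * V = 1) {ρ : Matrix (Fin d) (Fin d) ℂ}
    (hρ : IsState ρ) (m : ℕ) : IsState ((predual V)^[m] ρ) := by
  induction m with
  | zero => exact hρ
  | succ m ih => simpa only [Function.iterate_succ_apply'] using isState_predual V hV ih

@[simps]
def predualLinearMap : Matrix (Fin d) (Fin d) ℂ →ₗ[ℂ] Matrix (Fin d) (Fin d) ℂ where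
  toFun := predual V
  map_add' X Y := by simp only [predual, Matrix.mul_add, Matrix.add_mul, Finset.sum_add_distrib]
  map_smul' c X := by simp only [predual, Matrix.mul_smul, Matrix.smul_mul, Finset.smul_sum,
    RingHom.id_apply]

end Channel

section States

variable {d : ℕ}

open scoped Matrix.Norms.Elementwise

lemma norm_apply_le_one_of_isState {ρ : Matrix (Fin d) (Fin d) ℂ} (hρ : IsState ρ)
    (i j : Fin d) : ‖ρ i j‖ ≤ 1 := by
  have hdiag (a : Fin d) : ρ a a ≤ 1 :=
    hρ.2 ▸ Finset.single_le_sum (f := fun b => ρ b b) (fun b _ => hρ.1.diag_nonneg)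
      (Finset.mem_univ a)
  have hji : ρ j i = starRingEnd ℂ (ρ i j) := by
    simpa using (congrFun (congrFun hρ.1.1 j) i).symm
  have hminor := (hρ.1.submatrix ![i, j]).det_nonneg
  rw [det_fin_two] at hminor
  have : ((‖ρ i j‖ ^ 2 : ℝ) : ℂ) ≤ 1 := calc
    _ = ρ i j * ρ j i := by rw [hji, Complex.mul_conj, Complex.normSq_eq_norm_sq]
    _ ≤ ρ i i * ρ j j := by simpa using hminor
    _ ≤ 1 := mul_le_one₀ (hdiag i) hρ.1.diag_nonneg (hdiag j)
  exact (pow_le_one_iff_of_nonneg (norm_nonneg _) two_ne_zero).mp (by exact_mod_cast this)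

lemma norm_le_one_of_isState {ρ : Matrix (Fin d) (Fin d) ℂ} (hρ : IsState ρ) : ‖ρ‖ ≤ 1 :=
  (norm_le_iff zero_le_one).mpr (norm_apply_le_one_of_isState hρ)

lemma isCompact_setOf_isState : IsCompact {ρ : Matrix (Fin d) (Fin d) ℂ | IsState ρ} :=
  Metric.isCompact_of_isClosed_isBounded
    (isClosed_setOf_posSemidef.inter (isClosed_eq continuous_id.matrix_trace continuous_const))
    ((Metric.isBounded_closedBall (x := 0) (r := 1)).subset fun _ hρ =>
      mem_closedBall_zero_iff.mpr (norm_le_one_of_isState hρ))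

end States

section Cesaro

variable {d k : ℕ} (V : Matrix (Fin d × Fin k) (Fin d) ℂ)

def cesaroMean (ρ : Matrix (Fin d) (Fin d) ℂ) (N : ℕ) : Matrix (Fin d) (Fin d) ℂ :=
  ((N : ℂ) + 1)⁻¹ • ∑ m ∈ Finset.range (N + 1), (predual V)^[m] ρ

lemma isState_cesaroMean (hV : Vᴴ * V = 1) {ρ : Matrix (Fin d) (Fin d) ℂ} (hρ : IsState ρ)
    (N : ℕ) : IsState (cesaroMean V ρ N) := by
  have hN : ((N : ℂ) + 1) ≠ 0 := by exact_mod_cast N.succ_ne_zero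
  refine ⟨(posSemidef_sum _ fun m _ => (isState_iterate_predual V hV hρ m).1).smul ?_, ?_⟩
  · exact inv_nonneg.mpr (by exact_mod_cast (N + 1).cast_nonneg)
  · simp [cesaroMean, trace_sum, (isState_iterate_predual V hV hρ _).2, hN]

lemma predual_cesaroMean_sub (ρ : Matrix (Fin d) (Fin d) ℂ) (N : ℕ) :
    predual V (cesaroMean V ρ N) - cesaroMean V ρ N =
      ((N : ℂ) + 1)⁻¹ • ((predual V)^[N + 1] ρ - ρ) := by
  rw [← predualLinearMap_apply, cesaroMean, map_smul, map_sum, ← smul_sub,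
    ← Finset.sum_sub_distrib]
  simp only [predualLinearMap_apply, ← Function.iterate_succ_apply' (predual V)]
  rw [Finset.sum_range_sub (fun m => (predual V)^[m] ρ), Function.iterate_zero_apply]

open scoped Matrix.Norms.Elementwise in
lemma tendsto_predual_cesaroMean_sub (hV : Vᴴ * V = 1) {ρ : Matrix (Fin d) (Fin d) ℂ}
    (hρ : IsState ρ) :
    Tendsto (fun N => predual V (cesaroMean V ρ N) - cesaroMean V ρ N) atTop (𝓝 0) := by
  simp only [predual_cesaroMean_sub]
  refine Tendsto.zero_smul_isBoundedUnder_le ?_ ⟨2, eventually_map.mpr (.of_forall fun N => ?_)⟩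
  · simpa using tendsto_one_div_add_atTop_nhds_zero_nat (𝕜 := ℂ)
  · calc ‖(predual V)^[N + 1] ρ - ρ‖ ≤ ‖(predual V)^[N + 1] ρ‖ + ‖ρ‖ := norm_sub_le _ _
      _ ≤ 1 + 1 := add_le_add (norm_le_one_of_isState (isState_iterate_predual V hV hρ _))
          (norm_le_one_of_isState hρ)
      _ = 2 := one_add_one_eq_two

lemma predual_eq_of_mapClusterPt_cesaroMean (hV : Vᴴ * V = 1)
    {ρ σ : Matrix (Fin d) (Fin d) ℂ} (hρ : IsState ρ) (hσ : MapClusterPt σ atTop (cesaroMean V ρ)) :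
    predual V σ = σ := by
  have hcont : Continuous fun X => predual V X - X :=
    (predualLinearMap V).continuous_of_finiteDimensional.sub continuous_id
  exact sub_eq_zero.mp <| eq_of_nhds_neBot <|
    (hσ.continuousAt_comp hcont.continuousAt).clusterPt.mono
      (tendsto_predual_cesaroMean_sub V hV hρ)

theorem tendsto_cesaroMean {ρss ρ : Matrix (Fin d) (Fin d) ℂ} (h : IsIrreducible V ρss)
    (hρ : IsState ρ) : Tendsto (cesaroMean V ρ) atTop (𝓝 ρss) := by
  obtain ⟨hV, -, -, -, hunique⟩ := h
  refine isCompact_setOf_isState.tendsto_nhds_of_unique_mapClusterPt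
    (.of_forall (isState_cesaroMean V hV hρ)) fun σ hσ hclus => hunique σ hσ ?_
  exact predual_eq_of_mapClusterPt_cesaroMean V hV hρ hclus

end Cesaro

section Output

variable {d d₁ d₂ k : ℕ}
  {V₁ : Matrix (Fin d₁ × Fin k) (Fin d₁) ℂ} {V₂ : Matrix (Fin d₂ × Fin k) (Fin d₂) ℂ}

lemma outputEquiv_iff_outState_eq {ρ₁ : Matrix (Fin d₁) (Fin d₁) ℂ}
    {ρ₂ : Matrix (Fin d₂) (Fin d₂) ℂ} :
    OutputEquiv V₁ ρ₁ V₂ ρ₂ ↔ ∀ n, 1 ≤ n → outState V₁ ρ₁ n = outState V₂ ρ₂ n := by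
  simp only [OutputEquiv, outState, ← Matrix.ext_iff]

lemma krausWord_cons (V : Matrix (Fin d × Fin k) (Fin d) ℂ) {n : ℕ} (a : Fin k)
    (i : Fin n → Fin k) : krausWord V (Fin.cons a i) = krausWord V i * kraus V a := by
  simp [krausWord, List.ofFn_succ]

lemma trace_krausWord_predual (V : Matrix (Fin d × Fin k) (Fin d) ℂ) {n : ℕ}
    (i j : Fin n → Fin k) (ρ : Matrix (Fin d) (Fin d) ℂ) :
    (krausWord V i * predual V ρ * (krausWord V j)ᴴ).trace =
      ∑ a, (krausWord V (Fin.cons a i) * ρ * (krausWord V (Fin.cons a j))ᴴ).trace := by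
  simp only [predual, Finset.mul_sum, Finset.sum_mul, trace_sum, krausWord_cons,
    conjTranspose_mul, Matrix.mul_assoc]

namespace OutputEquiv

variable {ρ₁ : Matrix (Fin d₁) (Fin d₁) ℂ} {ρ₂ : Matrix (Fin d₂) (Fin d₂) ℂ}

lemma predual (h : OutputEquiv V₁ ρ₁ V₂ ρ₂) :
    OutputEquiv V₁ (predual V₁ ρ₁) V₂ (predual V₂ ρ₂) := fun n _ i j => by
  simp only [trace_krausWord_predual, h (n + 1) (Nat.le_add_left 1 n)]

lemma iterate_predual (h : OutputEquiv V₁ ρ₁ V₂ ρ₂) (m : ℕ) :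
    OutputEquiv V₁ ((QMCPaper.predual V₁)^[m] ρ₁) V₂ ((QMCPaper.predual V₂)^[m] ρ₂) := by
  induction m with
  | zero => exact h
  | succ m ih => simpa only [Function.iterate_succ_apply'] using ih.predual

lemma sum {ι : Type*} (s : Finset ι) {f₁ : ι → Matrix (Fin d₁) (Fin d₁) ℂ}
    {f₂ : ι → Matrix (Fin d₂) (Fin d₂) ℂ} (h : ∀ m ∈ s, OutputEquiv V₁ (f₁ m) V₂ (f₂ m)) :
    OutputEquiv V₁ (∑ m ∈ s, f₁ m) V₂ (∑ m ∈ s, f₂ m) := fun n hn i j => by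
  simp only [Finset.mul_sum, Finset.sum_mul, trace_sum]
  exact Finset.sum_congr rfl fun m hm => h m hm n hn i j

lemma smul (h : OutputEquiv V₁ ρ₁ V₂ ρ₂) (c : ℂ) : OutputEquiv V₁ (c • ρ₁) V₂ (c • ρ₂) :=
  fun n hn i j => by simp only [Matrix.mul_smul, Matrix.smul_mul, trace_smul, h n hn i j]

lemma cesaroMean (h : OutputEquiv V₁ ρ₁ V₂ ρ₂) (N : ℕ) :
    OutputEquiv V₁ (cesaroMean V₁ ρ₁ N) V₂ (cesaroMean V₂ ρ₂ N) :=
  (OutputEquiv.sum _ fun m _ => h.iterate_predual m).smul _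

theorem stationary {ρ₁ss : Matrix (Fin d₁) (Fin d₁) ℂ} {ρ₂ss : Matrix (Fin d₂) (Fin d₂) ℂ}
    (h₁ : IsIrreducible V₁ ρ₁ss) (h₂ : IsIrreducible V₂ ρ₂ss) (hρ₁ : IsState ρ₁)
    (hρ₂ : IsState ρ₂) (h : OutputEquiv V₁ ρ₁ V₂ ρ₂) : OutputEquiv V₁ ρ₁ss V₂ ρ₂ss := by
  intro n hn i j
  have hlim₁ := ((continuous_trace_mul_mul (krausWord V₁ i) (krausWord V₁ j)ᴴ).tendsto _).comp
    (tendsto_cesaroMean V₁ h₁ hρ₁)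
  have hlim₂ := ((continuous_trace_mul_mul (krausWord V₂ i) (krausWord V₂ j)ᴴ).tendsto _).comp
    (tendsto_cesaroMean V₂ h₂ hρ₂)
  exact tendsto_nhds_unique (hlim₁.congr fun N => h.cesaroMean N n hn i j) hlim₂

end OutputEquiv

end Output

section Macroscopic

variable {d₁ d₂ k k₀ : ℕ}
  {V₁ : Matrix (Fin d₁ × Fin k) (Fin d₁) ℂ} {ρ₁ : Matrix (Fin d₁) (Fin d₁) ℂ}
  {V₂ : Matrix (Fin d₂ × Fin k) (Fin d₂) ℂ} {ρ₂ : Matrix (Fin d₂) (Fin d₂) ℂ}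
  {Q : Matrix (Fin k₀ → Fin k) (Fin k₀ → Fin k) ℂ}

lemma statMean_congr (h : outState V₁ ρ₁ k₀ = outState V₂ ρ₂ k₀) :
    statMean V₁ ρ₁ Q = statMean V₂ ρ₂ Q := by
  rw [statMean, statMean, h]

lemma statCorr_congr (h : ∀ n, k₀ ≤ n → outState V₁ ρ₁ n = outState V₂ ρ₂ n) (l : ℕ) :
    statCorr V₁ ρ₁ Q l = statCorr V₂ ρ₂ Q l := by
  rw [statCorr, statCorr, statMean_congr (h k₀ le_rfl), h k₀ le_rfl, h (k₀ + l) le_self_add]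

lemma asympVar_congr (h : ∀ n, k₀ ≤ n → outState V₁ ρ₁ n = outState V₂ ρ₂ n) :
    asympVar V₁ ρ₁ Q = asympVar V₂ ρ₂ Q := by
  simp only [asympVar, statCorr_congr h]

end Macroscopic

/-- Proposition: the three notions of output equivalence agree. -/
theorem output_equivalence_notions {d₁ d₂ k : ℕ}
    (V₁ : Matrix (Fin d₁ × Fin k) (Fin d₁) ℂ) (ρ₁ss : Matrix (Fin d₁) (Fin d₁) ℂ)
    (V₂ : Matrix (Fin d₂ × Fin k) (Fin d₂) ℂ) (ρ₂ss : Matrix (Fin d₂) (Fin d₂) ℂ)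
    (h₁ : IsIrreducible V₁ ρ₁ss) (h₂ : IsIrreducible V₂ ρ₂ss) :
    -- (i) ↔ (ii): stationary output equivalence ↔ weak output equivalence
    (OutputEquiv V₁ ρ₁ss V₂ ρ₂ss ↔
      ∃ (ρ₁ : Matrix (Fin d₁) (Fin d₁) ℂ) (ρ₂ : Matrix (Fin d₂) (Fin d₂) ℂ),
        IsState ρ₁ ∧ IsState ρ₂ ∧ OutputEquiv V₁ ρ₁ V₂ ρ₂) ∧
    -- (i) ↔ (iii): stationary output equivalence ↔ macroscopic output equivalence
    (OutputEquiv V₁ ρ₁ss V₂ ρ₂ss ↔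
      ∀ (k₀ : ℕ), 1 ≤ k₀ →
        ∀ Q : Matrix (Fin k₀ → Fin k) (Fin k₀ → Fin k) ℂ, Q.IsHermitian →
          statMean V₁ ρ₁ss Q = statMean V₂ ρ₂ss Q ∧
          asympVar V₁ ρ₁ss Q = asympVar V₂ ρ₂ss Q) := by
  refine ⟨⟨fun h => ⟨ρ₁ss, ρ₂ss, h₁.2.1, h₂.2.1, h⟩,
    fun ⟨_, _, hρ₁, hρ₂, h⟩ => h.stationary h₁ h₂ hρ₁ hρ₂⟩, ⟨fun h k₀ hk₀ _ _ => ?_, fun h => ?_⟩⟩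
  · have hout := outputEquiv_iff_outState_eq.mp h
    exact ⟨statMean_congr (hout k₀ hk₀), asympVar_congr fun n hn => hout n (hk₀.trans hn)⟩
  · refine outputEquiv_iff_outState_eq.mpr fun n hn => ?_
    exact eq_of_trace_mul_isHermitian fun Q hQ => (h n hn Q hQ).1

end QMCPaper
end
end

section
/- Let V₁ and V₂ be isometries defining irreducible quantum Markov chains with the same environment dimension k and system dimensions d₁ and d₂, with stationary states ρ₁ˢˢ, ρ₂ˢˢ and Kraus operators K_{1,j}, K_{2,j}. Define the linear map T₁₂ on d₁×d₂ complex matrices by T₁₂(X) = V₁ᴴ (X ⊗ 1_k) V₂ = Σ_j K_{1,j}ᴴ X K_{2,j}. Then the following are equivalent: (1) T₁₂ admits an eigenvalue of modulus one, i.e. there exist c ∈ ℂ with |c| = 1 and a nonzero d₁×d₂ matrix F with T₁₂(F) = cF; (2) d₁ = d₂ and there exist a unitary d₁×d₂ matrix W and c ∈ ℂ with |c| = 1 such that W K_{2,j} = c K_{1,j} W for all j and W ρ₂ˢˢ = ρ₁ˢˢ W; (3) d₁ = d₂ and there exist a unitary d₁×d₂ matrix W and c ∈ ℂ with |c| = 1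 such that (W ⊗ 1_k) V₂ = c V₁ W. Moreover, in cases (2) and (3) one has T₁₂(W) = cW. -/
/-!
Let `T₁₂ F = c F` with `|c| = 1` and put `M = (F ⊗ 1) V₂ - c V₁ F`. As `V₁` is an isometry,
`MᴴM = T₂(FᴴF) - FᴴF`, so stationarity of `ρ₂` gives `tr(ρ₂ MᴴM) = 0` and faithfulness of `ρ₂`
forces `M = 0`, i.e. `F K₂ⱼ = c K₁ⱼ F`. Running the same argument for `Fᴴ`, an eigenvector of
`T₂₁` for `c̄`, shows that `FᴴF` commutes with every `K₂ⱼ` and `FFᴴ` with every `K₁ⱼ`. Irreducibility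
makes both scalar, so a multiple `W` of `F` is unitary, and then `W ρ₂ Wᴴ` is a stationary state of
the first chain, hence equal to `ρ₁`. Conversely, a unitary intertwiner satisfies
`T₁₂ W = V₁ᴴ V₁ (c W) = c W`.
-/

open Matrix Filter
open scoped Kronecker ComplexConjugate ComplexOrder

noncomputable section

namespace QMCPaper

/-- The map `T₁₂(X) = V₁ᴴ (X ⊗ 1_k) V₂` between two QMCs. -/
def chan12 {d₁ d₂ k : ℕ} (V₁ : Matrix (Fin d₁ × Fin k) (Fin d₁) ℂ)
    (V₂ : Matrix (Fin d₂ × Fin k) (Fin d₂) ℂ)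
    (X : Matrix (Fin d₁) (Fin d₂) ℂ) : Matrix (Fin d₁) (Fin d₂) ℂ :=
  V₁ᴴ * (X ⊗ₖ (1 : Matrix (Fin k) (Fin k) ℂ)) * V₂

end QMCPaper

namespace Matrix

variable {m n 𝕜 : Type*} [Fintype m] [Fintype n] [RCLike 𝕜]

theorem PosDef.eq_zero_of_mul_mul_conjTranspose_eq_zero {ρ : Matrix n n 𝕜} (hρ : ρ.PosDef)
    {B : Matrix m n 𝕜} (h : B * ρ * Bᴴ = 0) : B = 0 := by
  classical
  suffices hB : ∀ x, Bᴴ *ᵥ x = 0 by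
    exact conjTranspose_eq_zero.mp <| ext_of_mulVec_single fun i => by rw [hB, zero_mulVec]
  intro x
  by_contra hx
  have hpos := hρ.dotProduct_mulVec_pos hx
  rw [star_mulVec, conjTranspose_conjTranspose, ← dotProduct_mulVec, mulVec_mulVec,
    mulVec_mulVec, h, zero_mulVec, dotProduct_zero] at hpos
  exact hpos.false

theorem PosDef.eq_zero_of_trace_mul_conjTranspose_mul_self_eq_zero {ρ : Matrix n n 𝕜}
    (hρ : ρ.PosDef) {M : Matrix m n 𝕜} (h : (ρ * (Mᴴ * M)).trace = 0) : M = 0 := by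
  refine hρ.eq_zero_of_mul_mul_conjTranspose_eq_zero <|
    (hρ.posSemidef.mul_mul_conjTranspose_same M).trace_eq_zero_iff.mp ?_
  rwa [trace_mul_cycle, trace_mul_comm]

end Matrix

namespace QMCPaper

variable {d d₁ d₂ e k : ℕ}

lemma blk_mul (V : Matrix (Fin d₁ × Fin k) (Fin d₂) ℂ) (Y : Matrix (Fin d₂) (Fin e) ℂ)
    (j : Fin k) : blk (V * Y) j = blk V j * Y :=
  rfl

lemma blk_smul (c : ℂ) (V : Matrix (Fin d₁ × Fin k) (Fin d₂) ℂ) (j : Fin k) :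
    blk (c • V) j = c • blk V j :=
  rfl

lemma blk_kronecker_one_mul (X : Matrix (Fin d₁) (Fin d₂) ℂ)
    (V : Matrix (Fin d₂ × Fin k) (Fin e) ℂ) (j : Fin k) :
    blk ((X ⊗ₖ (1 : Matrix (Fin k) (Fin k) ℂ)) * V) j = X * blk V j := by
  ext a b
  simp [blk, mul_apply, Fintype.sum_prod_type, one_apply]

lemma ext_blk {V V' : Matrix (Fin d₁ × Fin k) (Fin d₂) ℂ} (h : ∀ j, blk V j = blk V' j) :
    V = V' := by
  ext ⟨a, j⟩ b
  exact congrFun (congrFun (h j) a) b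

lemma conjTranspose_mul_eq_sum_blk (V : Matrix (Fin d × Fin k) (Fin d₁) ℂ)
    (U : Matrix (Fin d × Fin k) (Fin d₂) ℂ) : Vᴴ * U = ∑ j, (blk V j)ᴴ * blk U j := by
  ext a b
  simp only [mul_apply, Fintype.sum_prod_type, Matrix.sum_apply, conjTranspose_apply, blk]
  exact Finset.sum_comm

lemma kronecker_one_mul_eq_smul_iff (X : Matrix (Fin d₁) (Fin d₂) ℂ)
    (V₁ : Matrix (Fin d₁ × Fin k) (Fin d₁) ℂ) (V₂ : Matrix (Fin d₂ × Fin k) (Fin d₂) ℂ)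
    (c : ℂ) :
    (X ⊗ₖ (1 : Matrix (Fin k) (Fin k) ℂ)) * V₂ = c • (V₁ * X) ↔
      ∀ j, X * kraus V₂ j = c • (kraus V₁ j * X) := by
  refine ⟨fun h j => ?_, fun h => ext_blk fun j => ?_⟩
  · simpa [kraus, blk_kronecker_one_mul, blk_smul, blk_mul] using congrArg (blk · j) h
  · simpa [kraus, blk_kronecker_one_mul, blk_smul, blk_mul] using h j

lemma chan_eq_kronecker (V : Matrix (Fin d × Fin k) (Fin d) ℂ) (X : Matrix (Fin d) (Fin d) ℂ) :
    chan V X = Vᴴ * (X ⊗ₖ (1 : Matrix (Fin k) (Fin k) ℂ)) * V := by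
  simp [chan, kraus, Matrix.mul_assoc, conjTranspose_mul_eq_sum_blk, blk_kronecker_one_mul]

lemma chan12_conjTranspose (V₁ : Matrix (Fin d₁ × Fin k) (Fin d₁) ℂ)
    (V₂ : Matrix (Fin d₂ × Fin k) (Fin d₂) ℂ) (X : Matrix (Fin d₁) (Fin d₂) ℂ) :
    (chan12 V₁ V₂ X)ᴴ = chan12 V₂ V₁ Xᴴ := by
  simp [chan12, conjTranspose_kronecker, Matrix.mul_assoc]

lemma trace_mul_chan (V : Matrix (Fin d × Fin k) (Fin d) ℂ) (ρ X : Matrix (Fin d) (Fin d) ℂ) :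
    (ρ * chan V X).trace = (predual V ρ * X).trace := by
  simp only [chan, predual, Matrix.mul_sum, Matrix.sum_mul, trace_sum]
  refine Finset.sum_congr rfl fun j _ => ?_
  rw [← Matrix.mul_assoc, trace_mul_comm, ← Matrix.mul_assoc, ← Matrix.mul_assoc,
    trace_mul_comm, ← Matrix.mul_assoc]

lemma predual_smul (V : Matrix (Fin d × Fin k) (Fin d) ℂ) (c : ℂ)
    (ρ : Matrix (Fin d) (Fin d) ℂ) : predual V (c • ρ) = c • predual V ρ := by
  simp [predual, Finset.smul_sum]

lemma star_mul_self_of_norm_eq_one {c : ℂ} (hc : ‖c‖ = 1) : star c * c = 1 := by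
  simp [Complex.conj_mul', hc]

lemma predual_mul_mul_conjTranspose {V₁ : Matrix (Fin d₁ × Fin k) (Fin d₁) ℂ}
    {V₂ : Matrix (Fin d₂ × Fin k) (Fin d₂) ℂ} {W : Matrix (Fin d₁) (Fin d₂) ℂ} {c : ℂ}
    (hc : ‖c‖ = 1) (hW : ∀ j, kraus V₁ j * W = c • (W * kraus V₂ j))
    (ρ : Matrix (Fin d₂) (Fin d₂) ℂ) :
    predual V₁ (W * ρ * Wᴴ) = W * predual V₂ ρ * Wᴴ := by
  simp only [predual, Matrix.mul_sum, Matrix.sum_mul]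
  refine Finset.sum_congr rfl fun j _ => ?_
  calc kraus V₁ j * (W * ρ * Wᴴ) * (kraus V₁ j)ᴴ
      = (kraus V₁ j * W) * ρ * (kraus V₁ j * W)ᴴ := by
        simp only [conjTranspose_mul, Matrix.mul_assoc]
    _ = (star c * c) • (W * kraus V₂ j * ρ * (W * kraus V₂ j)ᴴ) := by
        rw [hW, conjTranspose_smul, Matrix.smul_mul, Matrix.smul_mul, Matrix.mul_smul, smul_smul,
          mul_comm]
    _ = W * (kraus V₂ j * ρ * (kraus V₂ j)ᴴ) * Wᴴ := by
        rw [star_mul_self_of_norm_eq_one hc, one_smul]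
        simp only [conjTranspose_mul, Matrix.mul_assoc]

lemma IsState.pos_dim {ρ : Matrix (Fin d) (Fin d) ℂ} (h : IsState ρ) : 0 < d := by
  rcases Nat.eq_zero_or_pos d with rfl | hd
  · simpa using h.2
  · exact hd

namespace IsUnitaryMat

variable {W : Matrix (Fin d₁) (Fin d₂) ℂ}

theorem dim_eq (hW : IsUnitaryMat W) : d₁ = d₂ := by
  have h₁ : d₂ ≤ d₁ := by
    simpa [hW.1, rank_one] using (rank_mul_le_left Wᴴ W).trans (rank_le_width Wᴴ)
  have h₂ : d₁ ≤ d₂ := by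
    simpa [hW.2, rank_one] using (rank_mul_le_left W Wᴴ).trans (rank_le_width W)
  exact h₁.antisymm' h₂

theorem ne_zero (hW : IsUnitaryMat W) (hd : 0 < d₂) : W ≠ 0 := by
  rintro rfl
  simpa using congrFun (congrFun hW.1 ⟨0, hd⟩) ⟨0, hd⟩

end IsUnitaryMat

lemma exists_isUnitaryMat_smul {F : Matrix (Fin d₁) (Fin d₂) ℂ} (hF : F ≠ 0) {μ ν : ℂ}
    (hμ : Fᴴ * F = μ • 1) (hν : F * Fᴴ = ν • 1) : ∃ s : ℂ, IsUnitaryMat (s • F) := by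
  have hμν : ν = μ := by
    refine smul_left_injective ℂ hF ?_
    calc ν • F = F * Fᴴ * F := by rw [hν, Matrix.smul_mul, Matrix.one_mul]
      _ = μ • F := by rw [Matrix.mul_assoc, hμ, Matrix.mul_smul, Matrix.mul_one]
  obtain ⟨-, b, -⟩ : ∃ a b, F a b ≠ 0 := by
    by_contra! h
    exact hF (Matrix.ext h)
  have hμ0 : 0 < μ := by
    refine lt_of_le_of_ne ?_ ?_
    · simpa [hμ] using (posSemidef_conjTranspose_mul_self F).diag_nonneg (i := b)
    · rintro rfl
      exact hF (conjTranspose_mul_self_eq_zero.mp (by simpa using hμ))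
  obtain ⟨hre, him⟩ := Complex.pos_iff.mp hμ0
  set s : ℝ := (√μ.re)⁻¹
  have hs : star (s : ℂ) * s * μ = 1 := by
    have hsr : s * s * μ.re = 1 := by
      rw [← mul_inv, Real.mul_self_sqrt hre.le, inv_mul_cancel₀ hre.ne']
    rw [Complex.star_def, Complex.conj_ofReal, ← Complex.re_add_im μ, ← him]
    simpa using congrArg Complex.ofReal hsr
  refine ⟨s, ?_, ?_⟩
  · rw [conjTranspose_smul, Matrix.smul_mul, Matrix.mul_smul, smul_smul, hμ, smul_smul, hs,
      one_smul]
  · rw [conjTranspose_smul, Matrix.smul_mul, Matrix.mul_smul, smul_smul, hν, hμν, smul_smul,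
      mul_comm _ (star _), hs, one_smul]

namespace IsIrreducible

variable {V : Matrix (Fin d × Fin k) (Fin d) ℂ} {ρ : Matrix (Fin d) (Fin d) ℂ}

theorem eq_trace_smul_of_predual_eq (h : IsIrreducible V ρ) {σ : Matrix (Fin d) (Fin d) ℂ}
    (hσ : σ.PosSemidef) (hfix : predual V σ = σ) : σ = σ.trace • ρ := by
  by_cases htr : σ.trace = 0
  · rw [htr, zero_smul, ← hσ.trace_eq_zero_iff, htr]
  have hstate : IsState (σ.trace⁻¹ • σ) :=
    ⟨hσ.smul (inv_nonneg.mpr hσ.trace_nonneg), by rw [trace_smul, smul_eq_mul, inv_mul_cancel₀ htr]⟩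
  rw [← h.2.2.2.2 _ hstate (by rw [predual_smul, hfix]), smul_smul, mul_inv_cancel₀ htr, one_smul]

theorem eq_smul_one_of_commute (h : IsIrreducible V ρ) {G : Matrix (Fin d) (Fin d) ℂ}
    (hG : ∀ j, Commute (kraus V j) G) : ∃ t : ℂ, G = t • 1 := by
  have : NeZero d := ⟨h.2.1.pos_dim.ne'⟩
  obtain ⟨s, hs⟩ := Module.End.exists_eigenvalue (toLin' Gᴴ)
  obtain ⟨v, hv⟩ := hs.exists_hasEigenvector
  refine ⟨star s, sub_eq_zero.mp ?_⟩
  set G' := G - star s • (1 : Matrix (Fin d) (Fin d) ℂ)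
  have hG'v : G'ᴴ *ᵥ v = 0 := by
    have hGv : Gᴴ *ᵥ v = s • v := by simpa using hv.apply_eq_smul
    simp [G', conjTranspose_sub, sub_mulVec, hGv, smul_mulVec]
  have hG' : ∀ j, kraus V j * G' = (1 : ℂ) • (G' * kraus V j) := by
    intro j
    simp [G', Matrix.mul_sub, Matrix.sub_mul, (hG j).eq]
  -- `σ = G' ρ G'ᴴ` is a stationary positive matrix annihilating `v`, hence a multiple of `ρ`
  -- that must vanish
  set σ := G' * ρ * G'ᴴ
  have hσ : σ = σ.trace • ρ := h.eq_trace_smul_of_predual_eq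
    (h.2.2.2.1.posSemidef.mul_mul_conjTranspose_same G')
    (by rw [predual_mul_mul_conjTranspose (by simp) hG', h.2.2.1])
  have hσv : σ *ᵥ v = 0 := by simp [σ, ← mulVec_mulVec, hG'v]
  have htr : σ.trace = 0 := by
    by_contra htr
    have hpos := h.2.2.2.1.dotProduct_mulVec_pos hv.2
    rw [← inv_smul_smul₀ htr ρ, ← hσ, smul_mulVec, hσv, smul_zero, dotProduct_zero] at hpos
    exact hpos.false
  exact h.2.2.2.1.eq_zero_of_mul_mul_conjTranspose_eq_zero (hσ.trans (by rw [htr, zero_smul]))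

end IsIrreducible

section Intertwiner

variable {V₁ : Matrix (Fin d₁ × Fin k) (Fin d₁) ℂ} {ρ₁ : Matrix (Fin d₁) (Fin d₁) ℂ}
  {V₂ : Matrix (Fin d₂ × Fin k) (Fin d₂) ℂ} {ρ₂ : Matrix (Fin d₂) (Fin d₂) ℂ}
  {F : Matrix (Fin d₁) (Fin d₂) ℂ} {c : ℂ}

theorem kronecker_one_mul_eq_smul_of_chan12_eq_smul (hV₁ : V₁ᴴ * V₁ = 1) (hρ₂ : ρ₂.PosDef)
    (hst : predual V₂ ρ₂ = ρ₂) (hc : ‖c‖ = 1) (hF : chan12 V₁ V₂ F = c • F) :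
    (F ⊗ₖ (1 : Matrix (Fin k) (Fin k) ℂ)) * V₂ = c • (V₁ * F) := by
  set A := (F ⊗ₖ (1 : Matrix (Fin k) (Fin k) ℂ)) * V₂
  set B := V₁ * F
  have hAA : Aᴴ * A = chan V₂ (Fᴴ * F) := by
    simp only [A, chan_eq_kronecker, conjTranspose_mul, conjTranspose_kronecker,
      conjTranspose_one, Matrix.mul_assoc, ← Matrix.mul_assoc (Fᴴ ⊗ₖ _), ← mul_kronecker_mul,
      Matrix.one_mul]
  have hBA : Bᴴ * A = c • (Fᴴ * F) := by
    rw [conjTranspose_mul, Matrix.mul_assoc, ← Matrix.mul_assoc V₁ᴴ]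
    change Fᴴ * chan12 V₁ V₂ F = _
    rw [hF, Matrix.mul_smul]
  have hAB : Aᴴ * B = star c • (Fᴴ * F) := by
    rw [← conjTranspose_conjTranspose (Aᴴ * B), conjTranspose_mul, conjTranspose_conjTranspose,
      hBA, conjTranspose_smul, conjTranspose_mul, conjTranspose_conjTranspose]
  have hBB : Bᴴ * B = Fᴴ * F := by
    rw [conjTranspose_mul, Matrix.mul_assoc, ← Matrix.mul_assoc V₁ᴴ, hV₁, Matrix.one_mul]
  have hMM : (A - c • B)ᴴ * (A - c • B) = chan V₂ (Fᴴ * F) - Fᴴ * F := by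
    rw [conjTranspose_sub, conjTranspose_smul, Matrix.sub_mul, Matrix.mul_sub, Matrix.mul_sub,
      Matrix.smul_mul, Matrix.mul_smul, Matrix.smul_mul, Matrix.mul_smul, hAA, hBA, hAB, hBB,
      smul_smul, smul_smul, mul_comm c, star_mul_self_of_norm_eq_one hc, one_smul]
    abel
  refine sub_eq_zero.mp (hρ₂.eq_zero_of_trace_mul_conjTranspose_mul_self_eq_zero ?_)
  rw [hMM, Matrix.mul_sub, trace_sub, trace_mul_chan, hst, sub_self]

lemma commute_kraus_conjTranspose_mul_self (hc : ‖c‖ = 1)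
    (hF : ∀ j, F * kraus V₂ j = c • (kraus V₁ j * F))
    (hF' : ∀ j, Fᴴ * kraus V₁ j = star c • (kraus V₂ j * Fᴴ)) (j : Fin k) :
    Commute (kraus V₂ j) (Fᴴ * F) := by
  change _ = Fᴴ * F * kraus V₂ j
  rw [Matrix.mul_assoc Fᴴ, hF j, Matrix.mul_smul, ← Matrix.mul_assoc Fᴴ, hF' j, Matrix.smul_mul,
    smul_smul, mul_comm c, star_mul_self_of_norm_eq_one hc, one_smul, Matrix.mul_assoc]

theorem exists_isUnitaryMat_intertwiner_of_chan12_eq_smul (h₁ : IsIrreducible V₁ ρ₁)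
    (h₂ : IsIrreducible V₂ ρ₂) (hc : ‖c‖ = 1) (hF0 : F ≠ 0) (hF : chan12 V₁ V₂ F = c • F) :
    ∃ W : Matrix (Fin d₁) (Fin d₂) ℂ, IsUnitaryMat W ∧
      ∀ j, W * kraus V₂ j = c • (kraus V₁ j * W) := by
  have hFK := (kronecker_one_mul_eq_smul_iff F V₁ V₂ c).mp <|
    kronecker_one_mul_eq_smul_of_chan12_eq_smul h₁.1 h₂.2.2.2.1 h₂.2.2.1 hc hF
  have hF' : chan12 V₂ V₁ Fᴴ = star c • Fᴴ := by
    rw [← chan12_conjTranspose, hF, conjTranspose_smul]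
  have hFK' := (kronecker_one_mul_eq_smul_iff Fᴴ V₂ V₁ (star c)).mp <|
    kronecker_one_mul_eq_smul_of_chan12_eq_smul h₂.1 h₁.2.2.2.1 h₁.2.2.1 (by simpa using hc) hF'
  obtain ⟨μ, hμ⟩ := h₂.eq_smul_one_of_commute
    (commute_kraus_conjTranspose_mul_self hc hFK hFK')
  obtain ⟨ν, hν⟩ := h₁.eq_smul_one_of_commute (G := F * Fᴴ) <| by
    simpa using commute_kraus_conjTranspose_mul_self (by simpa using hc) hFK' (by simpa using hFK)
  obtain ⟨s, hs⟩ := exists_isUnitaryMat_smul hF0 hμ hν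
  exact ⟨s • F, hs, fun j => by rw [Matrix.smul_mul, hFK j, Matrix.mul_smul, smul_comm]⟩

theorem IsUnitaryMat.mul_eq_mul_of_intertwines {W : Matrix (Fin d₁) (Fin d₂) ℂ}
    (hW : IsUnitaryMat W) (h₁ : IsIrreducible V₁ ρ₁) (hρ₂ : IsState ρ₂)
    (hst : predual V₂ ρ₂ = ρ₂) (hc : ‖c‖ = 1) (hWK : ∀ j, W * kraus V₂ j = c • (kraus V₁ j * W)) :
    W * ρ₂ = ρ₁ * W := by
  have hKW : ∀ j, kraus V₁ j * W = star c • (W * kraus V₂ j) := fun j => by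
    rw [hWK j, smul_smul, star_mul_self_of_norm_eq_one hc, one_smul]
  have hρ : W * ρ₂ * Wᴴ = ρ₁ := h₁.2.2.2.2 _
    ⟨hρ₂.1.mul_mul_conjTranspose_same W, by rw [trace_mul_cycle, hW.1, Matrix.one_mul, hρ₂.2]⟩
    (by rw [predual_mul_mul_conjTranspose (by simpa using hc) hKW, hst])
  calc W * ρ₂ = W * ρ₂ * (Wᴴ * W) := by rw [hW.1, Matrix.mul_one]
    _ = ρ₁ * W := by rw [← hρ]; simp only [Matrix.mul_assoc]

theorem chan12_eq_smul_of_kronecker_one_mul_eq_smul {W : Matrix (Fin d₁) (Fin d₂) ℂ}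
    (hV₁ : V₁ᴴ * V₁ = 1) (h : (W ⊗ₖ (1 : Matrix (Fin k) (Fin k) ℂ)) * V₂ = c • (V₁ * W)) :
    chan12 V₁ V₂ W = c • W := by
  rw [chan12, Matrix.mul_assoc, h, Matrix.mul_smul, ← Matrix.mul_assoc, hV₁, Matrix.one_mul]

end Intertwiner

/-- Proposition: peripheral eigenvalues of `T₁₂`. -/
theorem chan12_peripheral_eigenvalue {d₁ d₂ k : ℕ}
    (V₁ : Matrix (Fin d₁ × Fin k) (Fin d₁) ℂ) (ρ₁ : Matrix (Fin d₁) (Fin d₁) ℂ)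
    (V₂ : Matrix (Fin d₂ × Fin k) (Fin d₂) ℂ) (ρ₂ : Matrix (Fin d₂) (Fin d₂) ℂ)
    (h₁ : IsIrreducible V₁ ρ₁) (h₂ : IsIrreducible V₂ ρ₂) :
    ((∃ (c : ℂ) (F : Matrix (Fin d₁) (Fin d₂) ℂ), ‖c‖ = 1 ∧ F ≠ 0 ∧
        chan12 V₁ V₂ F = c • F) ↔
      (d₁ = d₂ ∧ ∃ (W : Matrix (Fin d₁) (Fin d₂) ℂ) (c : ℂ), IsUnitaryMat W ∧
        ‖c‖ = 1 ∧ (∀ j : Fin k, W * kraus V₂ j = c • (kraus V₁ j * W)) ∧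
        W * ρ₂ = ρ₁ * W)) ∧
    ((∃ (c : ℂ) (F : Matrix (Fin d₁) (Fin d₂) ℂ), ‖c‖ = 1 ∧ F ≠ 0 ∧
        chan12 V₁ V₂ F = c • F) ↔
      (d₁ = d₂ ∧ ∃ (W : Matrix (Fin d₁) (Fin d₂) ℂ) (c : ℂ), IsUnitaryMat W ∧
        ‖c‖ = 1 ∧
        (W ⊗ₖ (1 : Matrix (Fin k) (Fin k) ℂ)) * V₂ = c • (V₁ * W))) ∧
    (∀ (W : Matrix (Fin d₁) (Fin d₂) ℂ) (c : ℂ), IsUnitaryMat W →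
      ((∀ j : Fin k, W * kraus V₂ j = c • (kraus V₁ j * W)) ∨
        (W ⊗ₖ (1 : Matrix (Fin k) (Fin k) ℂ)) * V₂ = c • (V₁ * W)) →
      chan12 V₁ V₂ W = c • W) := by
  have hK := fun W c => kronecker_one_mul_eq_smul_iff W V₁ V₂ c
  have fwd : (∃ (c : ℂ) (F : Matrix (Fin d₁) (Fin d₂) ℂ), ‖c‖ = 1 ∧ F ≠ 0 ∧
      chan12 V₁ V₂ F = c • F) → d₁ = d₂ ∧ ∃ (W : Matrix (Fin d₁) (Fin d₂) ℂ) (c : ℂ),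
        IsUnitaryMat W ∧ ‖c‖ = 1 ∧ (∀ j, W * kraus V₂ j = c • (kraus V₁ j * W)) ∧
        W * ρ₂ = ρ₁ * W := by
    rintro ⟨c, F, hc, hF0, hF⟩
    obtain ⟨W, hW, hWK⟩ := exists_isUnitaryMat_intertwiner_of_chan12_eq_smul h₁ h₂ hc hF0 hF
    exact ⟨hW.dim_eq, W, c, hW, hc, hWK, hW.mul_eq_mul_of_intertwines h₁ h₂.2.1 h₂.2.2.1 hc hWK⟩
  have bwd : ∀ (W : Matrix (Fin d₁) (Fin d₂) ℂ) (c : ℂ), IsUnitaryMat W → ‖c‖ = 1 →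
      (W ⊗ₖ (1 : Matrix (Fin k) (Fin k) ℂ)) * V₂ = c • (V₁ * W) →
      ∃ (c : ℂ) (F : Matrix (Fin d₁) (Fin d₂) ℂ), ‖c‖ = 1 ∧ F ≠ 0 ∧ chan12 V₁ V₂ F = c • F :=
    fun W c hW hc h => ⟨c, W, hc, hW.ne_zero h₂.2.1.pos_dim,
      chan12_eq_smul_of_kronecker_one_mul_eq_smul h₁.1 h⟩
  refine ⟨⟨fwd, ?_⟩, ⟨fun h => ?_, ?_⟩, fun W c _ h =>
    chan12_eq_smul_of_kronecker_one_mul_eq_smul h₁.1 (h.elim (hK W c).mpr id)⟩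
  · rintro ⟨-, W, c, hW, hc, hWK, -⟩
    exact bwd W c hW hc ((hK W c).mpr hWK)
  · obtain ⟨hd, W, c, hW, hc, hWK, -⟩ := fwd h
    exact ⟨hd, W, c, hW, hc, (hK W c).mpr hWK⟩
  · rintro ⟨-, W, c, hW, hc, h⟩
    exact bwd W c hW hc h

end QMCPaper
end
end

section
/- Let A and B be n×n complex positive semidefinite matrices, and let √A and √B denote their (unique) positive semidefinite square roots. Then ‖√A − √B‖ ≤ ‖A − B‖^{1/2}, where ‖·‖ denotes the ℓ²-operator norm (largest singular value) of a matrix. -/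
/-!
Write `D = √A - √B` and take an eigenvector `x` of the Hermitian matrix `D` whose eigenvalue
`μ` satisfies `|μ| = ‖D‖`. Since `A - B = √A D + D √B`, we get
`⟪(A - B) x, x⟫ = μ ⟪(√A + √B) x, x⟫`, while `|μ| ‖x‖² ≤ ⟪(√A + √B) x, x⟫` because
`√A + √B ± D` is `2√A` or `2√B`. Hence
`‖D‖² ‖x‖² = μ² ‖x‖² ≤ |⟪(A - B) x, x⟫| ≤ ‖A - B‖ ‖x‖²`.
-/

namespace ContinuousLinearMap

open Module.End RCLike
open scoped InnerProductSpace

variable {𝕜 E : Type*} [RCLike 𝕜] [NormedAddCommGroup E] [InnerProductSpace 𝕜 E]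

theorem exists_hasEigenvector_abs_eq_norm [FiniteDimensional 𝕜 E] [Nontrivial E]
    {T : E →L[𝕜] E} (hT : (T : E →ₗ[𝕜] E).IsSymmetric) :
    ∃ (μ : ℝ) (x : E), HasEigenvector (T : E →ₗ[𝕜] E) μ x ∧ |μ| = ‖T‖ := by
  have := FiniteDimensional.complete 𝕜 E
  have hT' : IsSelfAdjoint T := isSelfAdjoint_iff_isSymmetric.mpr hT
  have hne : (spectrum 𝕜 T).Nonempty := by
    rw [spectrum_eq]
    exact ⟨_, hT.hasEigenvalue_iSup_of_finiteDimensional.mem_spectrum⟩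
  obtain ⟨μ, hμ, hμT⟩ := spectrum.exists_nnnorm_eq_spectralRadius_of_nonempty hne
  rw [spectralRadius_eq_nnnorm T hT', ENNReal.coe_inj] at hμT
  rw [spectrum_eq, ← hasEigenvalue_iff_mem_spectrum] at hμ
  have hμ_real : (re μ : 𝕜) = μ := conj_eq_iff_re.mp (hT.conj_eigenvalue_eq_self hμ)
  obtain ⟨x, hx⟩ := hμ.exists_hasEigenvector
  refine ⟨re μ, x, by rwa [hμ_real], ?_⟩
  rw [← coe_nnnorm, ← hμT, coe_nnnorm, ← norm_ofReal (K := 𝕜), hμ_real]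

theorem IsPositive.abs_re_inner_sub_le {S T : E →L[𝕜] E}
    (hS : S.IsPositive) (hT : T.IsPositive) (x : E) :
    |re ⟪(S - T) x, x⟫_𝕜| ≤ re ⟪(S + T) x, x⟫_𝕜 := by
  have hSx := hS.re_inner_nonneg_left x
  have hTx := hT.re_inner_nonneg_left x
  simp only [sub_apply, add_apply, inner_sub_left, inner_add_left, map_sub, map_add]
  exact abs_le.mpr ⟨by linarith, by linarith⟩

theorem inner_mul_self_sub_mul_self_of_apply_eq_smul {S T : E →L[𝕜] E}
    (hS : S.IsSymmetric) (hT : T.IsSymmetric) {μ : ℝ} {x : E} (hx : (S - T) x = (μ : 𝕜) • x) :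
    ⟪(S * S - T * T) x, x⟫_𝕜 = μ * ⟪(S + T) x, x⟫_𝕜 := by
  have hsplit : S * S - T * T = S * (S - T) + (S - T) * T := by noncomm_ring
  have hST : ((S - T : E →L[𝕜] E) : E →ₗ[𝕜] E).IsSymmetric := by
    rw [toLinearMap_sub]; exact hS.sub hT
  have hSD : ⟪S ((S - T) x), x⟫_𝕜 = μ * ⟪S x, x⟫_𝕜 := by
    rw [hx, map_smul, inner_smul_left, conj_ofReal]
  have hDT : ⟪(S - T) (T x), x⟫_𝕜 = μ * ⟪T x, x⟫_𝕜 := by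
    rw [← coe_coe, hST, coe_coe, hx, inner_smul_right]
  rw [hsplit, add_apply, mul_apply_eq_comp, mul_apply_eq_comp, inner_add_left, hSD, hDT,
    add_apply, inner_add_left]
  ring

theorem abs_re_inner_le_norm (T : E →L[𝕜] E) (x : E) :
    |re ⟪T x, x⟫_𝕜| ≤ ‖T‖ * ‖x‖ ^ 2 := by
  calc |re ⟪T x, x⟫_𝕜| ≤ ‖T x‖ * ‖x‖ := (abs_re_le_norm _).trans (norm_inner_le_norm _ _)
    _ ≤ ‖T‖ * ‖x‖ * ‖x‖ := by gcongr; exact T.le_opNorm x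
    _ = ‖T‖ * ‖x‖ ^ 2 := by ring

theorem IsPositive.sq_norm_sub_le [FiniteDimensional 𝕜 E] {S T : E →L[𝕜] E}
    (hS : S.IsPositive) (hT : T.IsPositive) : ‖S - T‖ ^ 2 ≤ ‖S * S - T * T‖ := by
  rcases subsingleton_or_nontrivial E with hE | hE
  · simp [Subsingleton.elim S T]
  have hD : ((S - T : E →L[𝕜] E) : E →ₗ[𝕜] E).IsSymmetric := by
    rw [toLinearMap_sub]; exact hS.isSymmetric.sub hT.isSymmetric
  obtain ⟨μ, x, hx, hμ⟩ := exists_hasEigenvector_abs_eq_norm hD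
  have hDx : (S - T) x = (μ : 𝕜) • x := hx.apply_eq_smul
  have hx0 : 0 < ‖x‖ ^ 2 := by have := hx.2; positivity
  set t := re ⟪(S + T) x, x⟫_𝕜
  have hμt : |μ| * ‖x‖ ^ 2 ≤ t := by
    have h := hS.abs_re_inner_sub_le hT x
    rwa [hDx, inner_smul_left, conj_ofReal, inner_self_eq_norm_sq_to_K, ← ofReal_pow,
      ← ofReal_mul, ofReal_re, abs_mul, abs_of_nonneg hx0.le] at h
  have hμq : |μ| * t ≤ ‖S * S - T * T‖ * ‖x‖ ^ 2 := by
    have h := (S * S - T * T).abs_re_inner_le_norm x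
    have ht : 0 ≤ t := (hS.add hT).re_inner_nonneg_left x
    rwa [inner_mul_self_sub_mul_self_of_apply_eq_smul hS.isSymmetric hT.isSymmetric hDx,
      re_ofReal_mul, abs_mul, abs_of_nonneg ht] at h
  have hsq : ‖S - T‖ ^ 2 * ‖x‖ ^ 2 ≤ ‖S * S - T * T‖ * ‖x‖ ^ 2 :=
    calc ‖S - T‖ ^ 2 * ‖x‖ ^ 2 = |μ| * (|μ| * ‖x‖ ^ 2) := by rw [← hμ]; ring
      _ ≤ |μ| * t := by gcongr
      _ ≤ ‖S * S - T * T‖ * ‖x‖ ^ 2 := hμq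
  exact le_of_mul_le_mul_right hsq hx0

end ContinuousLinearMap

open Matrix
open scoped ComplexOrder

noncomputable section

/-- The positive semidefinite square root of a positive semidefinite matrix
(the definition removed from Mathlib, restored with its old meaning). -/
def Matrix.PosSemidef.sqrt {n 𝕜 : Type*} [Fintype n] [DecidableEq n] [RCLike 𝕜]
    {A : Matrix n n 𝕜} (hA : A.PosSemidef) : Matrix n n 𝕜 :=
  hA.1.eigenvectorUnitary.1 * diagonal ((↑) ∘ (√·) ∘ hA.1.eigenvalues) *
  (star hA.1.eigenvectorUnitary : Matrix n n 𝕜)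

namespace Matrix.PosSemidef

variable {n 𝕜 : Type*} [Fintype n] [DecidableEq n] [RCLike 𝕜] {A : Matrix n n 𝕜}

theorem posSemidef_sqrt (hA : A.PosSemidef) : hA.sqrt.PosSemidef := by
  rw [Matrix.PosSemidef.sqrt, star_eq_conjTranspose]
  exact (posSemidef_diagonal_iff.mpr fun i => by simp [Real.sqrt_nonneg]).mul_mul_conjTranspose_same
    _

theorem sqrt_mul_self (hA : A.PosSemidef) : hA.sqrt * hA.sqrt = A := by
  have hsqrt : hA.sqrt = Unitary.conjStarAlgAut 𝕜 _ hA.1.eigenvectorUnitary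
      (diagonal ((↑) ∘ (√·) ∘ hA.1.eigenvalues)) := rfl
  conv_rhs => rw [hA.1.spectral_theorem]
  rw [hsqrt, ← map_mul, diagonal_mul_diagonal]
  congr 2 with i
  simp [← RCLike.ofReal_mul, Real.mul_self_sqrt (hA.eigenvalues_nonneg i)]

theorem isPositive_toEuclideanCLM (hA : A.PosSemidef) :
    (toEuclideanCLM (𝕜 := 𝕜) A).IsPositive := by
  rw [← ContinuousLinearMap.isPositive_toLinearMap_iff, coe_toEuclideanCLM_eq_toEuclideanLin]
  exact isPositive_toEuclideanLin_iff.mpr hA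

end Matrix.PosSemidef

namespace QMCPaper

/-- The ℓ²-operator norm (largest singular value) of a complex matrix, defined as the
operator norm of the associated linear map between Euclidean spaces. -/
def l2OpNorm {m n : ℕ} (A : Matrix (Fin m) (Fin n) ℂ) : ℝ :=
  ‖LinearMap.toContinuousLinearMap (Matrix.toEuclideanLin A)‖

theorem l2OpNorm_eq_norm_toEuclideanCLM {n : ℕ} (A : Matrix (Fin n) (Fin n) ℂ) :
    l2OpNorm A = ‖toEuclideanCLM (𝕜 := ℂ) A‖ :=
  rfl

/-- Lemma: the positive semidefinite square root is operator-norm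
Hölder-1/2. -/
theorem sqrt_holder {n : ℕ} (A B : Matrix (Fin n) (Fin n) ℂ)
    (hA : A.PosSemidef) (hB : B.PosSemidef) :
    l2OpNorm (hA.sqrt - hB.sqrt) ≤ Real.sqrt (l2OpNorm (A - B)) := by
  have key := hA.posSemidef_sqrt.isPositive_toEuclideanCLM.sq_norm_sub_le
    hB.posSemidef_sqrt.isPositive_toEuclideanCLM
  rw [← map_sub, ← map_mul, ← map_mul, hA.sqrt_mul_self, hB.sqrt_mul_self, ← map_sub] at key
  rw [l2OpNorm_eq_norm_toEuclideanCLM, l2OpNorm_eq_norm_toEuclideanCLM]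
  exact Real.le_sqrt_of_sq_le key

end QMCPaper
end
end
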